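/- Let G be a finite simple graph, and let x, y be adjacent vertices with x ∈ ker(G) and y ∈ N(ker(G)). Then there exists a matching f from N(ker(G)) into ker(G) with f(y) ≠ x, i.e., every edge between ker(G) and N(ker(G)) is avoided by at least one matching from N(ker(G)) into ker(G). -/
import Mathlib


open Finset

namespace CritGraph

variable {V : Type*} [Fintype V] [DecidableEq V]

/-- The neighborhood of a set of vertices `X`:
all vertices having at least one neighbor in `X`. -/
def nbhd (G : SimpleGraph V) [DecidableRel G.Adj] (X : Finset V) : Finset V :=
  univ.filter fun v => ∃ x ∈ X, G.Adj v x

/-- The difference `d(X) = |X| - |N(X)|` of a set of vertices `X`. -/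
def diff (G : SimpleGraph V) [DecidableRel G.Adj] (X : Finset V) : ℤ :=
  (X.card : ℤ) - ((nbhd G X).card : ℤ)

/-- A set of vertices is independent if no two of its vertices are adjacent. -/
def IsIndep (G : SimpleGraph V) (S : Finset V) : Prop :=
  ∀ u ∈ S, ∀ v ∈ S, ¬ G.Adj u v

instance (G : SimpleGraph V) [DecidableRel G.Adj] : DecidablePred (IsIndep G) := fun S =>
  inferInstanceAs (Decidable (∀ u ∈ S, ∀ v ∈ S, ¬ G.Adj u v))

/-- The critical difference `d_c(G) = max {d(X) : X ⊆ V}`. -/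
def dC (G : SimpleGraph V) [DecidableRel G.Adj] : ℤ :=
  (univ : Finset V).powerset.sup' (Finset.powerset_nonempty _) (diff G)

/-- The critical independence difference `id_c(G) = max {d(I) : I independent}`. -/
def idC (G : SimpleGraph V) [DecidableRel G.Adj] : ℤ :=
  ((univ : Finset V).powerset.filter (IsIndep G)).sup'
    ⟨∅, by simp [IsIndep]⟩ (diff G)

/-- `A` is a critical independent set: `A` is independent and
`d(A) = max {d(I) : I independent}`. -/
def IsCritIndep (G : SimpleGraph V) [DecidableRel G.Adj] (A : Finset V) : Prop :=
  IsIndep G A ∧ ∀ I : Finset V, IsIndep G I → diff G I ≤ diff G A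

instance (G : SimpleGraph V) [DecidableRel G.Adj] : DecidablePred (IsCritIndep G) := fun A =>
  inferInstanceAs (Decidable (IsIndep G A ∧ ∀ I : Finset V, IsIndep G I → diff G I ≤ diff G A))

/-- `ker(G)`: the intersection of all critical independent sets of `G`. -/
def kerG (G : SimpleGraph V) [DecidableRel G.Adj] : Finset V :=
  univ.filter fun v => ∀ A : Finset V, IsCritIndep G A → v ∈ A

/-- `G - v`: the induced subgraph of `G` on `V \ {v}`. -/
def deleteVert (G : SimpleGraph V) (v : V) : SimpleGraph {u : V // u ≠ v} :=
  G.comap Subtype.val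

instance (G : SimpleGraph V) (v : V) [DecidableRel G.Adj] :
    DecidableRel (deleteVert G v).Adj := fun a b =>
  inferInstanceAs (Decidable (G.Adj a.val b.val))

/-- `S` is an inclusion-minimal independent set with positive difference. -/
def MinPosIndep (G : SimpleGraph V) [DecidableRel G.Adj] (S : Finset V) : Prop :=
  IsIndep G S ∧ 0 < diff G S ∧ ∀ S' ⊂ S, ¬ (IsIndep G S' ∧ 0 < diff G S')

/-- `S` is a maximum independent set. -/
def IsMaxIndep (G : SimpleGraph V) (S : Finset V) : Prop :=
  IsIndep G S ∧ ∀ I : Finset V, IsIndep G I → I.card ≤ S.card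

instance (G : SimpleGraph V) [DecidableRel G.Adj] : DecidablePred (IsMaxIndep G) := fun S =>
  inferInstanceAs (Decidable (IsIndep G S ∧ ∀ I : Finset V, IsIndep G I → I.card ≤ S.card))

/-- `core(G)`: the intersection of all maximum independent sets of `G`. -/
def coreG (G : SimpleGraph V) [DecidableRel G.Adj] : Finset V :=
  univ.filter fun v => ∀ A : Finset V, IsMaxIndep G A → v ∈ A


section Aux

variable (G : SimpleGraph V) [DecidableRel G.Adj]

lemma mem_nbhd {X : Finset V} {v : V} : v ∈ nbhd G X ↔ ∃ x ∈ X, G.Adj v x := by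
  simp [nbhd]

lemma nbhd_mono {X Y : Finset V} (h : X ⊆ Y) : nbhd G X ⊆ nbhd G Y := by
  intro v hv
  rw [mem_nbhd] at hv ⊢
  obtain ⟨a, ha, hadj⟩ := hv
  exact ⟨a, h ha, hadj⟩

lemma nbhd_union (X Y : Finset V) : nbhd G (X ∪ Y) = nbhd G X ∪ nbhd G Y := by
  ext v
  simp only [mem_nbhd, Finset.mem_union]
  constructor
  · rintro ⟨a, ha | ha, hadj⟩
    · exact Or.inl ⟨a, ha, hadj⟩
    · exact Or.inr ⟨a, ha, hadj⟩
  · rintro (⟨a, ha, hadj⟩ | ⟨a, ha, hadj⟩)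
    · exact ⟨a, Or.inl ha, hadj⟩
    · exact ⟨a, Or.inr ha, hadj⟩

lemma isIndep_subset {X Y : Finset V} (hY : IsIndep G Y) (h : X ⊆ Y) : IsIndep G X :=
  fun u hu v hv => hY u (h hu) v (h hv)

/-- Zhang's trick: `X \ N(X)` is independent with difference at least `d(X)`. -/
lemma zhang (X : Finset V) : ∃ I : Finset V, IsIndep G I ∧ diff G X ≤ diff G I := by
  refine ⟨X \ nbhd G X, ?_, ?_⟩
  · intro u hu v hv hadj
    rw [Finset.mem_sdiff] at hu hv
    exact hu.2 ((mem_nbhd G).2 ⟨v, hv.1, hadj⟩)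
  · have hsub : nbhd G (X \ nbhd G X) ⊆ nbhd G X \ X := by
      intro w hw
      rw [mem_nbhd] at hw
      obtain ⟨a, ha, hadj⟩ := hw
      rw [Finset.mem_sdiff] at ha
      rw [Finset.mem_sdiff]
      refine ⟨(mem_nbhd G).2 ⟨a, ha.1, hadj⟩, fun hwX => ?_⟩
      exact ha.2 ((mem_nbhd G).2 ⟨w, hwX, hadj.symm⟩)
    have h1 : (X \ nbhd G X).card + (X ∩ nbhd G X).card = X.card :=
      Finset.card_sdiff_add_card_inter X (nbhd G X)
    have h2 : (nbhd G X \ X).card + (nbhd G X ∩ X).card = (nbhd G X).card :=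
      Finset.card_sdiff_add_card_inter (nbhd G X) X
    have h3 : (nbhd G (X \ nbhd G X)).card ≤ (nbhd G X \ X).card :=
      Finset.card_le_card hsub
    have h4 : (X ∩ nbhd G X).card = (nbhd G X ∩ X).card := by
      rw [Finset.inter_comm]
    unfold diff
    omega

lemma exists_critIndep : ∃ A : Finset V, IsCritIndep G A := by
  obtain ⟨A, hA, hmax⟩ := Finset.exists_max_image
    ((univ : Finset V).powerset.filter (IsIndep G)) (diff G) ⟨∅, by simp [IsIndep]⟩
  rw [Finset.mem_filter] at hA
  refine ⟨A, hA.2, fun I hI => hmax I ?_⟩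
  rw [Finset.mem_filter]
  exact ⟨Finset.mem_powerset.2 (Finset.subset_univ I), hI⟩

lemma critIndep_inter {A B : Finset V} (hA : IsCritIndep G A) (hB : IsCritIndep G B) :
    IsCritIndep G (A ∩ B) := by
  have hindep : IsIndep G (A ∩ B) := isIndep_subset G hA.1 Finset.inter_subset_left
  -- d(A ∪ B) ≤ d(A) via Zhang
  obtain ⟨I, hI, hle⟩ := zhang G (A ∪ B)
  have hUB : diff G (A ∪ B) ≤ diff G A := hle.trans (hA.2 I hI)
  -- submodularity
  have hc1 : (A ∪ B).card + (A ∩ B).card = A.card + B.card :=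
    Finset.card_union_add_card_inter A B
  have hc2 : (nbhd G A ∪ nbhd G B).card + (nbhd G A ∩ nbhd G B).card
      = (nbhd G A).card + (nbhd G B).card :=
    Finset.card_union_add_card_inter _ _
  have hc3 : (nbhd G (A ∪ B)).card = (nbhd G A ∪ nbhd G B).card := by
    rw [nbhd_union]
  have hc4 : (nbhd G (A ∩ B)).card ≤ (nbhd G A ∩ nbhd G B).card := by
    refine Finset.card_le_card fun v hv => ?_
    rw [Finset.mem_inter]
    exact ⟨nbhd_mono G Finset.inter_subset_left hv,
      nbhd_mono G Finset.inter_subset_right hv⟩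
  have key : diff G B ≤ diff G (A ∩ B) := by
    unfold diff at hUB ⊢
    omega
  exact ⟨hindep, fun I hI => (hB.2 I hI).trans key⟩

lemma kerG_critIndep : IsCritIndep G (kerG G) := by
  obtain ⟨A, hAmem, hAmin⟩ := Finset.exists_min_image
    ((univ : Finset V).powerset.filter (IsCritIndep G)) Finset.card
    (by
      obtain ⟨A, hA⟩ := exists_critIndep G
      exact ⟨A, Finset.mem_filter.2 ⟨Finset.mem_powerset.2 (Finset.subset_univ A), hA⟩⟩)
  rw [Finset.mem_filter] at hAmem
  have hA : IsCritIndep G A := hAmem.2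
  -- A is contained in every critical independent set
  have hsub : ∀ B : Finset V, IsCritIndep G B → A ⊆ B := by
    intro B hB
    have hAB : IsCritIndep G (A ∩ B) := critIndep_inter G hA hB
    have hle : A.card ≤ (A ∩ B).card := hAmin (A ∩ B)
      (Finset.mem_filter.2 ⟨Finset.mem_powerset.2 (Finset.subset_univ _), hAB⟩)
    have : A ∩ B = A :=
      Finset.eq_of_subset_of_card_le Finset.inter_subset_left
        (le_trans hle (le_refl _)) |>.symm ▸ rfl
    have hAB' : A ∩ B = A :=
      Finset.eq_of_subset_of_card_le Finset.inter_subset_left hle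
    intro v hv
    rw [← hAB'] at hv
    exact (Finset.mem_inter.1 hv).2
  have hker : kerG G = A := by
    ext v
    simp only [kerG, Finset.mem_filter, Finset.mem_univ, true_and]
    exact ⟨fun h => h A hA, fun hv B hB => hsub B hB hv⟩
  rw [hker]
  exact hA

lemma kerG_subset {A : Finset V} (hA : IsCritIndep G A) : kerG G ⊆ A := by
  intro v hv
  simp only [kerG, Finset.mem_filter, Finset.mem_univ, true_and] at hv
  exact hv A hA

/-- Strict Hall property: for nonempty `X ⊆ N(ker G)`, `|N(X) ∩ ker G| ≥ |X| + 1`. -/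
lemma strict_hall {X : Finset V} (hX : X ⊆ nbhd G (kerG G)) (hne : X.Nonempty) :
    X.card + 1 ≤ (nbhd G X ∩ kerG G).card := by
  set K := kerG G with hK
  have hKcrit : IsCritIndep G K := kerG_critIndep G
  by_contra hcon
  push_neg at hcon
  have hcard : (nbhd G X ∩ K).card ≤ X.card := by omega
  set A' := K \ nbhd G X with hA'
  have hA'indep : IsIndep G A' := isIndep_subset G hKcrit.1 (Finset.sdiff_subset)
  have hNsub : nbhd G A' ⊆ nbhd G K \ X := by
    intro u hu
    rw [mem_nbhd] at hu
    obtain ⟨a, ha, hadj⟩ := hu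
    rw [Finset.mem_sdiff] at ha
    rw [Finset.mem_sdiff]
    refine ⟨(mem_nbhd G).2 ⟨a, ha.1, hadj⟩, fun huX => ?_⟩
    exact ha.2 ((mem_nbhd G).2 ⟨u, huX, hadj.symm⟩)
  have h1 : A'.card + (K ∩ nbhd G X).card = K.card :=
    Finset.card_sdiff_add_card_inter K (nbhd G X)
  have h2 : (nbhd G A').card ≤ (nbhd G K \ X).card := Finset.card_le_card hNsub
  have h3 : (nbhd G K \ X).card + X.card = (nbhd G K).card := by
    rw [Finset.card_sdiff_add_card_eq_card hX]
  have h4 : (K ∩ nbhd G X).card = (nbhd G X ∩ K).card := by rw [Finset.inter_comm]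
  have hdiff : diff G K ≤ diff G A' := by
    unfold diff
    omega
  have hA'crit : IsCritIndep G A' :=
    ⟨hA'indep, fun I hI => (hKcrit.2 I hI).trans hdiff⟩
  -- K ∩ N(X) is nonempty
  obtain ⟨u, hu⟩ := hne
  have hunb : u ∈ nbhd G K := hX hu
  rw [mem_nbhd] at hunb
  obtain ⟨a, haK, hadj⟩ := hunb
  have haNX : a ∈ nbhd G X := (mem_nbhd G).2 ⟨u, hu, hadj.symm⟩
  have haA' : a ∈ A' := kerG_subset G hA'crit haK
  rw [Finset.mem_sdiff] at haA'
  exact haA'.2 haNX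

end Aux


/-- Every edge between `ker(G)` and `N(ker(G))` is avoided by at least one matching
from `N(ker(G))` into `ker(G)`. -/
theorem exists_matching_avoiding_edge (G : SimpleGraph V) [DecidableRel G.Adj]
    (x y : V) (hxy : G.Adj x y) (hx : x ∈ kerG G) (hy : y ∈ nbhd G (kerG G)) :
    ∃ f : V → V, Set.InjOn f ↑(nbhd G (kerG G)) ∧
      (∀ u ∈ nbhd G (kerG G), f u ∈ kerG G ∧ G.Adj u (f u)) ∧ f y ≠ x := by
  classical
  set K := kerG G with hKdef
  set N := nbhd G K with hNdef
  -- allowed targets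
  set t : {u : V // u ∈ N} → Finset V :=
    fun u => (K.filter fun a => G.Adj u.1 a) \ (if u.1 = y then {x} else ∅) with ht
  have hall : ∀ s : Finset {u : V // u ∈ N}, s.card ≤ (s.biUnion t).card := by
    intro s
    rcases s.eq_empty_or_nonempty with rfl | hs
    · simp
    · set X := s.image Subtype.val with hX
      have hXsub : X ⊆ N := by
        intro v hv
        rw [hX, Finset.mem_image] at hv
        obtain ⟨u, _, rfl⟩ := hv
        exact u.2
      have hXne : X.Nonempty := hs.image _
      have hXcard : X.card = s.card :=
        Finset.card_image_of_injective s Subtype.val_injective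
      have hstrict := strict_hall G hXsub hXne
      have hsub2 : (nbhd G X ∩ K) \ {x} ⊆ s.biUnion t := by
        intro a ha
        rw [Finset.mem_sdiff, Finset.mem_inter, mem_nbhd] at ha
        obtain ⟨⟨⟨u, huX, hadj⟩, haK⟩, hax⟩ := ha
        have hax' : a ≠ x := by simpa using hax
        rw [hX, Finset.mem_image] at huX
        obtain ⟨u', hu's, rfl⟩ := huX
        refine Finset.mem_biUnion.2 ⟨u', hu's, ?_⟩
        rw [ht, Finset.mem_sdiff, Finset.mem_filter]
        refine ⟨⟨haK, hadj.symm⟩, ?_⟩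
        intro hmem
        split_ifs at hmem with h
        · exact hax' (Finset.mem_singleton.1 hmem)
        · simp at hmem
      have hcard2 : ((nbhd G X ∩ K) \ {x}).card + 1 ≥ (nbhd G X ∩ K).card := by
        have := Finset.card_sdiff_add_card_eq_card
          (Finset.inter_subset_left (s₁ := nbhd G X ∩ K) (s₂ := {x}))
        have h := Finset.card_le_card (Finset.sdiff_subset_sdiff
          (Finset.Subset.refl (nbhd G X ∩ K)) (Finset.Subset.refl {x}))
        have h2 : (nbhd G X ∩ K).card ≤ ((nbhd G X ∩ K) \ {x}).card + ({x} : Finset V).card :=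
          Finset.card_le_card_sdiff_add_card
        simpa using h2
      have hstrict' : X.card + 1 ≤ (nbhd G X ∩ K).card := by rw [hKdef]; exact hstrict
      have h5 := Finset.card_le_card hsub2
      omega
  obtain ⟨f', hf'inj, hf'mem⟩ :=
    (Finset.all_card_le_biUnion_card_iff_exists_injective t).1 hall
  refine ⟨fun v => if h : v ∈ N then f' ⟨v, h⟩ else v, ?_, ?_, ?_⟩
  · intro u hu v hv huv
    rw [Finset.mem_coe] at hu hv
    simp only [dif_pos hu, dif_pos hv] at huv
    have := hf'inj huv
    exact congrArg Subtype.val this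
  · intro u hu
    have h := hf'mem ⟨u, hu⟩
    rw [ht, Finset.mem_sdiff, Finset.mem_filter] at h
    simp only [dif_pos hu]
    exact ⟨h.1.1, h.1.2⟩
  · have h := hf'mem ⟨y, hy⟩
    rw [ht, Finset.mem_sdiff] at h
    simp only [dif_pos hy]
    intro hEq
    apply h.2
    simp [hEq]


end CritGraph
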